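/- Suppose that for every pair of vertices v, u ∈ E⁰ and every k ≥ 1 there is a path w ∈ E* with s(w) = v, r(w) = u, and n_k dividing |w|. Then the only nonempty closed invariant subset of Y is Y itself (i.e., E(∞) is minimal). Key step: under the hypothesis, elements of the form τ(w[k]) with |w[k]| a multiple of n_k and r(w[k]) = v converge to τ(v) = (v, v, …) as k → ∞. -/

import Mathlib

/-!
A point `y` of `Y` is determined by its truncations `y_k ⋯ y_1 y_0`, paths of length
`< n (k + 1)`. Applying the odometer maps along a path `p` appends `p` to every truncation
and keeps only the last `|·| mod n (k + 1)` edges. So from any `y ∈ Y₀` one can walk until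
the length is a multiple of `n (k + 1)`, then along a path of length divisible by
`n (k + 1)` (given by the hypothesis) to `s(t_k)`, and finally along `t_k ⋯ t_0`: by
invariance this lands in `Y₀` at a point agreeing with `t` in the coordinates up to `k`.
Since `Y₀` is closed, `t ∈ Y₀`.
-/

/-- A directed graph: vertices, edges, source and range maps. -/
structure DirGraph where
  V : Type
  E : Type
  s : E → V
  r : E → V

namespace DirGraph

/-- `G.IsPathFrom x l` : the list of edges `l` (in walking order) forms a
path starting at the vertex `x`. -/
def IsPathFrom (G : DirGraph) : G.V → List G.E → Prop
  | _, [] => True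
  | x, e :: es => G.s e = x ∧ G.IsPathFrom (G.r e) es

/-- The vertex reached after walking the edges `l` starting at `x`. -/
def endAt (G : DirGraph) : G.V → List G.E → G.V
  | x, [] => x
  | _, e :: es => G.endAt (G.r e) es

/-- A finite path in `G`: a source vertex together with a composable list of
edges (in walking order).  Vertices are the paths with no edges. -/
structure Path (G : DirGraph) where
  src : G.V
  edges : List G.E
  valid : G.IsPathFrom src edges

namespace Path

variable {G : DirGraph}

/-- The range (final vertex) of a path. -/
def rng (p : G.Path) : G.V := G.endAt p.src p.edges

/-- The length of a path. -/
def length (p : G.Path) : ℕ := p.edges.length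

/-- The trivial path at a vertex. -/
def nil (x : G.V) : G.Path := ⟨x, [], trivial⟩

end Path

variable {G : DirGraph}

theorem isPathFrom_append :
    ∀ (l₁ l₂ : List G.E) (x : G.V), G.IsPathFrom x l₁ →
      G.IsPathFrom (G.endAt x l₁) l₂ → G.IsPathFrom x (l₁ ++ l₂)
  | [], _, _, _, h₂ => h₂
  | e :: es, l₂, _, h₁, h₂ => ⟨h₁.1, isPathFrom_append es l₂ (G.r e) h₁.2 h₂⟩

theorem endAt_append :
    ∀ (l₁ l₂ : List G.E) (x : G.V), G.endAt x (l₁ ++ l₂) = G.endAt (G.endAt x l₁) l₂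
  | [], _, _ => rfl
  | e :: es, l₂, x => endAt_append es l₂ (G.r e)

theorem isPathFrom_take_drop :
    ∀ (l : List G.E) (k : ℕ) (x : G.V), G.IsPathFrom x l →
      G.IsPathFrom (G.endAt x (l.take k)) (l.drop k)
  | [], k, _, h => by cases k <;> exact h
  | _ :: _, 0, _, h => h
  | e :: es, k + 1, x, h => isPathFrom_take_drop es k (G.r e) h.2

/-- Extend a path by one more edge at its end (`p.cons e` is the path `e·p`). -/
def Path.cons (p : G.Path) (e : G.E) (h : G.s e = p.rng) : G.Path :=
  ⟨p.src, p.edges ++ [e], isPathFrom_append p.edges [e] p.src p.valid ⟨h, trivial⟩⟩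

@[simp] theorem Path.cons_length (p : G.Path) (e : G.E) (h : G.s e = p.rng) :
    (p.cons e h).length = p.length + 1 := by
  simp [Path.cons, Path.length]

/-- The remainder `w(n)` of a path modulo `n`: the final segment of length
`|w| % n` (the part of `w` walked last). -/
def Path.rem (p : G.Path) (n : ℕ) : G.Path :=
  ⟨G.endAt p.src (p.edges.take (p.length - p.length % n)),
   p.edges.drop (p.length - p.length % n),
   isPathFrom_take_drop p.edges _ p.src p.valid⟩

theorem Path.rem_length (p : G.Path) (n : ℕ) : (p.rem n).length = p.length % n := by
  show (p.edges.drop (p.length - p.length % n)).length = _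
  rw [List.length_drop]
  exact Nat.sub_sub_self (Nat.mod_le _ _)

theorem Path.rem_rng (p : G.Path) (n : ℕ) : (p.rem n).rng = p.rng := by
  show G.endAt (G.endAt p.src (p.edges.take (p.length - p.length % n)))
      (p.edges.drop (p.length - p.length % n)) = _
  rw [← endAt_append, List.take_append_drop]
  rfl

/-- The graph `E(n)`: vertices are paths of length `< n` in `G`, edges are
pairs `(e, w)` with `s(e) = r(w)`; `s(e,w) = w` and `r(e,w) = ew` if
`|w| < n - 1`, and `r(e,w) = r(e)` if `|w| = n - 1`. -/
def graphN (G : DirGraph) (n : ℕ) : DirGraph where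
  V := {w : G.Path // w.length < n}
  E := {p : G.E × G.Path // p.2.length < n ∧ G.s p.1 = p.2.rng}
  s := fun f => ⟨f.val.2, f.prop.1⟩
  r := fun f =>
    if h : f.val.2.length + 1 < n then
      ⟨f.val.2.cons f.val.1 f.prop.2, by simpa using h⟩
    else
      ⟨Path.nil (G.r f.val.1), by
        have := f.prop.1
        simp only [Path.nil, Path.length, List.length_nil]
        omega⟩

/-- A factor map between (finite) directed graphs. -/
structure FactorMap (F E : DirGraph) where
  m0 : F.V → E.V
  m1 : F.E → E.E
  src_eq : ∀ f, E.s (m1 f) = m0 (F.s f)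
  rng_eq : ∀ f, E.r (m1 f) = m0 (F.r f)
  lift : ∀ (e' : E.E) (v : F.V), E.s e' = m0 v →
    ∃! f : F.E, m1 f = e' ∧ F.s f = v

/-- The simple loop (cycle) digraph with `j` vertices. -/
def cyc (j : ℕ) : DirGraph where
  V := ZMod j
  E := ZMod j
  s := id
  r := fun i => i + 1

end DirGraph

namespace DirGraph

/-- `Xc G n i` is the (discrete) space `X_{i+1}` of paths in `G` of length
`< n (i+1)` whose length is divisible by `n i`. -/
abbrev Xc (G : DirGraph) (n : ℕ → ℕ) (i : ℕ) : Type :=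
  {w : G.Path // w.length < n (i + 1) ∧ n i ∣ w.length}

instance (G : DirGraph) (n : ℕ → ℕ) (i : ℕ) : TopologicalSpace (Xc G n i) := ⊥

instance (G : DirGraph) (n : ℕ → ℕ) (i : ℕ) : DiscreteTopology (Xc G n i) := ⟨rfl⟩

/-- `Yt G n` is the `{n_k}`-compactification `Y` of `E*`: the composable
sequences in `Π_i X_i`, with the product topology (each `X_i` discrete). -/
abbrev Yt (G : DirGraph) (n : ℕ → ℕ) : Type :=
  {y : ∀ i, Xc G n i // ∀ i, (y i).val.src = (y (i + 1)).val.rng}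

/-- The `i`-th coordinate path of an element of `Y`. -/
def yc {G : DirGraph} {n : ℕ → ℕ} (y : Yt G n) (i : ℕ) : G.Path := (y.val i).val

/-- The domain `D_e = { y ∈ Y : r(y₁) = s(e) }` of the odometer map `σ_e`. -/
def De (G : DirGraph) (n : ℕ → ℕ) (e : G.E) : Set (Yt G n) :=
  {y | (yc y 0).rng = G.s e}

/-- `Represents G n w y` says that `y ∈ Y` is the image `τ(w)` of the path
`w` under the canonical embedding: from some index `k` on the coordinates are
the trivial path at `s(w)`, and `w` is the concatenation `w₁ w₂ ⋯ w_k` of the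
first `k` coordinates (the `k`-th walked first). -/
def Represents (G : DirGraph) (n : ℕ → ℕ) (w : G.Path) (y : Yt G n) : Prop :=
  ∃ k : ℕ,
    (∀ i, k ≤ i → (yc y i).edges = [] ∧ (yc y i).src = w.src) ∧
    w.edges = (((List.range k).map fun i => (yc y i).edges).reverse).flatten

/-- `Carry G n e y z i0` : `z = σ_e(y)` where `i0 = i(y) < ∞` is the least
index with `|y_{i0}| < n_{i0+1} - n_{i0}`: the coordinates below `i0` of `z`
are the trivial path at `r(e)`, the `i0`-th is `e y₀ y₁ ⋯ y_{i0}`, and the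
coordinates above `i0` are unchanged. -/
def Carry (G : DirGraph) (n : ℕ → ℕ) (e : G.E) (y z : Yt G n) (i0 : ℕ) : Prop :=
  (yc y i0).length < n (i0 + 1) - n i0 ∧
  (∀ i < i0, ¬ (yc y i).length < n (i + 1) - n i) ∧
  (∀ i < i0, (yc z i).edges = [] ∧ (yc z i).src = G.r e) ∧
  (yc z i0).src = (yc y i0).src ∧
  (yc z i0).edges =
    (yc y i0).edges ++ (((List.range i0).map fun i => (yc y i).edges).reverse).flatten
      ++ [e] ∧
  ∀ i, i0 < i → yc z i = yc y i

/-- `OdRel G n e y z` : `z = σ_e(y)`, the graph of the odometer map `σ_e`: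
either there is a least index `i0 = i(y)` and a carry happens there, or all
coordinates of `y` are maximal and `z = (r(e), r(e), …)`. -/
def OdRel (G : DirGraph) (n : ℕ → ℕ) (e : G.E) (y z : Yt G n) : Prop :=
  (∃ i0, Carry G n e y z i0) ∨
  ((∀ i, ¬ (yc y i).length < n (i + 1) - n i) ∧
    ∀ i, (yc z i).edges = [] ∧ (yc z i).src = G.r e)

/-- A subset `B ⊆ Y` is invariant for the odometer maps `σ`. -/
def Invariant (G : DirGraph) (n : ℕ → ℕ) (σ : G.E → Yt G n → Yt G n)
    (B : Set (Yt G n)) : Prop :=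
  (∀ e : G.E, ∀ y ∈ B ∩ De G n e, σ e y ∈ B) ∧
  (∀ y : Yt G n, (∃ f : G.E, ∃ z ∈ De G n f ∩ B, σ f z = y) → y ∈ B)

end DirGraph

theorem Nat.sub_mod_add_of_dvd {N a b : ℕ} (h : N ∣ a) :
    a + b - (a + b) % N = a + (b - b % N) := by
  obtain ⟨c, rfl⟩ := h
  have hmod : (N * c + b) % N = b % N := by
    rw [Nat.add_comm, Nat.add_mul_mod_self_left]
  have := Nat.mod_le b N
  omega

theorem mem_of_forall_exists_eqOn_le {X : ℕ → Type*} [∀ i, TopologicalSpace (X i)]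
    [∀ i, DiscreteTopology (X i)] {P : (∀ i, X i) → Prop} {s : Set (Subtype P)}
    (hs : IsClosed s) {t : Subtype P} (h : ∀ k, ∃ z ∈ s, ∀ i ≤ k, z.val i = t.val i) :
    t ∈ s := by
  choose z hzs hzt using h
  have hlim : Filter.Tendsto z Filter.atTop (nhds t) := by
    rw [tendsto_subtype_rng, tendsto_pi_nhds]
    intro i
    rw [nhds_discrete, Filter.tendsto_pure]
    exact Filter.eventually_atTop.2 ⟨i, fun k hk => hzt k i hk⟩
  exact hs.mem_of_tendsto hlim (Filter.Eventually.of_forall hzs)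

namespace DirGraph

variable {G : DirGraph}

theorem isPathFrom_singleton {x : G.V} {e : G.E} : G.IsPathFrom x [e] ↔ G.s e = x :=
  ⟨And.left, fun h => ⟨h, trivial⟩⟩

namespace Path

theorem ext {p q : G.Path} (hs : p.src = q.src) (he : p.edges = q.edges) : p = q := by
  cases p; cases q; cases hs; cases he; rfl

def append (p : G.Path) (l : List G.E) (h : G.IsPathFrom p.rng l) : G.Path :=
  ⟨p.src, p.edges ++ l, isPathFrom_append p.edges l p.src p.valid h⟩

theorem rng_append (p : G.Path) (l : List G.E) (h : G.IsPathFrom p.rng l) :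
    (p.append l h).rng = G.endAt p.rng l :=
  endAt_append _ _ _

theorem append_nil (p : G.Path) (h : G.IsPathFrom p.rng []) : p.append [] h = p :=
  ext rfl (List.append_nil _)

theorem append_append (p : G.Path) (l₁ l₂ : List G.E) (h₁ : G.IsPathFrom p.rng l₁)
    (h₂ : G.IsPathFrom (p.append l₁ h₁).rng l₂) (h : G.IsPathFrom p.rng (l₁ ++ l₂)) :
    (p.append l₁ h₁).append l₂ h₂ = p.append (l₁ ++ l₂) h :=
  ext rfl (List.append_assoc _ _ _)

theorem nil_append (p : G.Path) (h : G.IsPathFrom (nil p.src).rng p.edges) :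
    (nil p.src).append p.edges h = p :=
  ext rfl rfl

theorem rem_eq_self {p : G.Path} {N : ℕ} (h : p.length < N) : p.rem N = p := by
  refine ext ?_ ?_ <;> simp [rem, Nat.mod_eq_of_lt h]
  rfl

theorem rem_eq_nil {p : G.Path} {N : ℕ} (h : N ∣ p.length) : p.rem N = nil p.rng := by
  have hmod : p.edges.length % N = 0 := Nat.mod_eq_zero_of_dvd h
  refine ext ?_ ?_ <;> simp [rem, nil, length, hmod]
  rfl

/-- Reducing modulo `N` commutes with appending, like `(a % N + b) % N = (a + b) % N`. -/
theorem rem_append_of_eq_rem {p q : G.Path} {N : ℕ} (hpq : p = q.rem N) {l : List G.E}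
    (hp : G.IsPathFrom p.rng l) (hq : G.IsPathFrom q.rng l) :
    (p.append l hp).rem N = (q.append l hq).rem N := by
  subst hpq
  set m := q.length - q.length % N
  have hm : (q.edges.take m).length = m := List.length_take_of_le (Nat.sub_le _ _)
  have hsplit : q.edges ++ l = q.edges.take m ++ (q.edges.drop m ++ l) := by
    rw [← List.append_assoc, List.take_append_drop]
  have hcut : (q.edges ++ l).length - (q.edges ++ l).length % N
      = (q.edges.take m).length + ((q.edges.drop m ++ l).length
          - (q.edges.drop m ++ l).length % N) := by
    rw [hsplit, List.length_append, hm]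
    exact Nat.sub_mod_add_of_dvd (Nat.dvd_sub_mod _)
  have hlen : (q.append l hq).length = (q.edges ++ l).length := rfl
  have hedges : (q.append l hq).edges = q.edges ++ l := rfl
  refine ext ?_ ?_
  · show G.endAt (G.endAt q.src (q.edges.take m)) _ = G.endAt q.src _
    rw [hlen, hcut, hedges, hsplit, List.take_length_add_append, endAt_append]
    rfl
  · show List.drop _ _ = List.drop _ _
    rw [hlen, hcut, hedges, hsplit, List.drop_length_add_append]
    rfl

end Path

section Compactification

variable {n : ℕ → ℕ}

def lowEdges (y : Yt G n) (m : ℕ) : List G.E :=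
  (((List.range m).map fun i => (yc y i).edges).reverse).flatten

@[simp] theorem lowEdges_zero (y : Yt G n) : lowEdges y 0 = [] := rfl

theorem lowEdges_succ (y : Yt G n) (m : ℕ) :
    lowEdges y (m + 1) = (yc y m).edges ++ lowEdges y m := by
  simp [lowEdges, List.range_succ]

theorem lowEdges_eq_nil (y : Yt G n) {m : ℕ} (h : ∀ i < m, (yc y i).edges = []) :
    lowEdges y m = [] := by
  induction m with
  | zero => rfl
  | succ m ih => rw [lowEdges_succ, h m m.lt_succ_self, ih fun i hi => h i (by omega)]; rfl

theorem isPathFrom_lowEdges (y : Yt G n) (k : ℕ) :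
    G.IsPathFrom (yc y k).src (lowEdges y (k + 1)) ∧
      G.endAt (yc y k).src (lowEdges y (k + 1)) = (yc y 0).rng := by
  induction k with
  | zero => simpa [lowEdges_succ] using ⟨(yc y 0).valid, rfl⟩
  | succ k ih =>
    have hjoin : G.endAt (yc y (k + 1)).src (yc y (k + 1)).edges = (yc y k).src :=
      (y.prop k).symm
    rw [lowEdges_succ, endAt_append, hjoin]
    exact ⟨isPathFrom_append _ _ _ (yc y (k + 1)).valid (hjoin ▸ ih.1), ih.2⟩

/-- The path `y_k ⋯ y_1 y_0` of the first `k + 1` coordinates of `y`. -/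
def initPath (y : Yt G n) (k : ℕ) : G.Path :=
  ⟨(yc y k).src, lowEdges y (k + 1), (isPathFrom_lowEdges y k).1⟩

theorem initPath_rng (y : Yt G n) (k : ℕ) : (initPath y k).rng = (yc y 0).rng :=
  (isPathFrom_lowEdges y k).2

theorem initPath_zero (y : Yt G n) : initPath y 0 = yc y 0 :=
  Path.ext rfl (List.append_nil _)

theorem initPath_length_succ (y : Yt G n) (k : ℕ) :
    (initPath y (k + 1)).length = (yc y (k + 1)).length + (initPath y k).length := by
  simp only [initPath, Path.length, lowEdges_succ (m := k + 1), List.length_append]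

theorem length_yc_lt (y : Yt G n) (i : ℕ) : (yc y i).length < n (i + 1) := (y.val i).prop.1

theorem dvd_length_yc (y : Yt G n) (i : ℕ) : n i ∣ (yc y i).length := (y.val i).prop.2

theorem length_yc_add_le (hdvd : ∀ i, n i ∣ n (i + 1)) (y : Yt G n) (i : ℕ) :
    (yc y i).length + n i ≤ n (i + 1) :=
  Nat.le_of_lt_add_of_dvd (Nat.add_lt_add_right (length_yc_lt y i) _)
    (Nat.dvd_add_self_right.2 (dvd_length_yc y i)) (hdvd i)

theorem initPath_length_lt (hdvd : ∀ i, n i ∣ n (i + 1)) (y : Yt G n) (k : ℕ) :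
    (initPath y k).length < n (k + 1) := by
  induction k with
  | zero => rw [initPath_zero]; exact length_yc_lt y 0
  | succ k ih =>
    have := length_yc_add_le hdvd y (k + 1)
    rw [initPath_length_succ]
    omega

theorem initPath_length_of_full (hdvd : ∀ i, n i ∣ n (i + 1)) (y : Yt G n) (k : ℕ)
    (hfull : ∀ i ≤ k, ¬ (yc y i).length < n (i + 1) - n i) :
    (initPath y k).length + n 0 = n (k + 1) := by
  have hcoord : ∀ i ≤ k, (yc y i).length + n i = n (i + 1) := fun i hi => by
    have := length_yc_add_le hdvd y i
    have := hfull i hi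
    omega
  induction k with
  | zero => rw [initPath_zero]; exact hcoord 0 le_rfl
  | succ k ih =>
    have := hcoord (k + 1) le_rfl
    have := ih (fun i hi => hfull i (by omega)) (fun i hi => hcoord i (by omega))
    rw [initPath_length_succ]
    omega

theorem lowEdges_of_carry {e : G.E} {y z : Yt G n} {i0 k : ℕ} (hc : Carry G n e y z i0)
    (hk : i0 ≤ k) : lowEdges z (k + 1) = lowEdges y (k + 1) ++ [e] := by
  obtain ⟨-, -, hlow, -, hedges, hhigh⟩ := hc
  induction k, hk using Nat.le_induction with
  | base =>
    have hedges' : (yc z i0).edges = (yc y i0).edges ++ lowEdges y i0 ++ [e] := hedges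
    rw [lowEdges_succ, lowEdges_succ, hedges', lowEdges_eq_nil z fun i hi => (hlow i hi).1,
      List.append_nil]
  | succ k hk ih =>
    rw [lowEdges_succ z (k + 1), lowEdges_succ y (k + 1), hhigh (k + 1) (by omega), ih,
      List.append_assoc]

theorem initPath_of_carry {e : G.E} {y z : Yt G n} {i0 k : ℕ} (hc : Carry G n e y z i0)
    (hk : i0 ≤ k) (h : G.IsPathFrom (initPath y k).rng [e]) :
    initPath z k = (initPath y k).append [e] h := by
  refine Path.ext ?_ (lowEdges_of_carry hc hk)
  rcases hk.eq_or_lt with rfl | hlt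
  · exact hc.2.2.2.1
  · show (yc z k).src = (yc y k).src
    rw [hc.2.2.2.2.2 k hlt]

theorem initPath_of_reset {e : G.E} {z : Yt G n} {k : ℕ}
    (hz : ∀ i ≤ k, (yc z i).edges = [] ∧ (yc z i).src = G.r e) :
    initPath z k = Path.nil (G.r e) :=
  Path.ext (hz k le_rfl).2 (lowEdges_eq_nil z fun i hi => (hz i (by omega)).1)

/-- A carry beyond index `k` happens exactly when `y_k ⋯ y_0` has length `n (k + 1) - 1`,
and then the truncation of `z` is trivial at `r(e)`. -/
theorem initPath_of_odRel (h0 : n 0 = 1) (hdvd : ∀ i, n i ∣ n (i + 1)) {e : G.E}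
    {y z : Yt G n} (hz : OdRel G n e y z) (k : ℕ) (h : G.IsPathFrom (initPath y k).rng [e]) :
    initPath z k = ((initPath y k).append [e] h).rem (n (k + 1)) := by
  have of_full : (∀ i ≤ k, ¬ (yc y i).length < n (i + 1) - n i) →
      (∀ i ≤ k, (yc z i).edges = [] ∧ (yc z i).src = G.r e) →
      initPath z k = ((initPath y k).append [e] h).rem (n (k + 1)) := fun hfull hreset => by
    have hlen := initPath_length_of_full hdvd y k hfull
    rw [Path.rem_eq_nil ⟨1, by simp [Path.append, Path.length] at hlen ⊢; omega⟩,
      initPath_of_reset hreset, Path.rng_append]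
    rfl
  rcases hz with ⟨i0, hc⟩ | ⟨hfull, hreset⟩
  · rcases le_or_gt i0 k with hk | hk
    · rw [← initPath_of_carry hc hk h, Path.rem_eq_self (initPath_length_lt hdvd z k)]
    · exact of_full (fun i hi => hc.2.1 i (by omega)) (fun i hi => hc.2.2.1 i (by omega))
  · exact of_full (fun i _ => hfull i) (fun i _ => hreset i)

theorem rng_of_odRel (h0 : n 0 = 1) (hdvd : ∀ i, n i ∣ n (i + 1)) {e : G.E} {y z : Yt G n}
    (hy : y ∈ De G n e) (hz : OdRel G n e y z) : (yc z 0).rng = G.r e := by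
  have h : G.IsPathFrom (initPath y 0).rng [e] :=
    isPathFrom_singleton.2 ((initPath_rng y 0).trans hy).symm
  rw [← initPath_rng z 0, initPath_of_odRel h0 hdvd hz 0 h, Path.rem_rng, Path.rng_append]
  rfl

theorem foldl_odometer_mem (h0 : n 0 = 1) (hdvd : ∀ i, n i ∣ n (i + 1))
    {σ : G.E → Yt G n → Yt G n} (hσ : ∀ e, ∀ y ∈ De G n e, OdRel G n e y (σ e y))
    {Y₀ : Set (Yt G n)} (hY₀ : ∀ e, ∀ y ∈ Y₀ ∩ De G n e, σ e y ∈ Y₀) :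
    ∀ (p : List G.E) (y : Yt G n), y ∈ Y₀ → G.IsPathFrom (yc y 0).rng p →
      p.foldl (fun y e => σ e y) y ∈ Y₀
  | [], _, hy, _ => hy
  | e :: es, y, hy, ⟨he, hes⟩ =>
    have hyDe : y ∈ De G n e := he.symm
    foldl_odometer_mem h0 hdvd hσ hY₀ es (σ e y) (hY₀ e y ⟨hy, hyDe⟩)
      ((rng_of_odRel h0 hdvd hyDe (hσ e y hyDe)).symm ▸ hes)

theorem initPath_foldl_odometer (h0 : n 0 = 1) (hdvd : ∀ i, n i ∣ n (i + 1))
    {σ : G.E → Yt G n → Yt G n} (hσ : ∀ e, ∀ y ∈ De G n e, OdRel G n e y (σ e y)) :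
    ∀ (p : List G.E) (y : Yt G n), G.IsPathFrom (yc y 0).rng p →
      ∀ k (h : G.IsPathFrom (initPath y k).rng p),
        initPath (p.foldl (fun y e => σ e y) y) k =
          ((initPath y k).append p h).rem (n (k + 1))
  | [], y, _, k, h => by
    rw [List.foldl_nil, Path.append_nil, Path.rem_eq_self (initPath_length_lt hdvd y k)]
  | e :: es, y, ⟨he, hes⟩, k, h => by
    have hyDe : y ∈ De G n e := he.symm
    have hrng := rng_of_odRel h0 hdvd hyDe (hσ e y hyDe)
    have hstep := initPath_of_odRel h0 hdvd (hσ e y hyDe) k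
      (isPathFrom_singleton.2 ((initPath_rng y k).trans he.symm).symm)
    rw [List.foldl_cons, initPath_foldl_odometer h0 hdvd hσ es (σ e y) (hrng.symm ▸ hes) k
        (by rw [initPath_rng, hrng]; exact hes),
      Path.rem_append_of_eq_rem hstep _ (by rw [Path.rng_append]; exact hes),
      Path.append_append]
    rfl

theorem exists_path_length (hnosink : ∀ v : G.V, ∃ e : G.E, G.s e = v) :
    ∀ (m : ℕ) (v : G.V), ∃ p : G.Path, p.src = v ∧ p.length = m
  | 0, v => ⟨Path.nil v, rfl, rfl⟩
  | m + 1, v => by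
    obtain ⟨e, he⟩ := hnosink v
    obtain ⟨p, hp, hlen⟩ := exists_path_length hnosink m (G.r e)
    exact ⟨⟨v, e :: p.edges, he, hp ▸ p.valid⟩, rfl, by simpa [Path.length] using hlen⟩

theorem exists_mem_initPath_eq_nil (h0 : n 0 = 1) (hdvd : ∀ i, n i ∣ n (i + 1))
    (hnosink : ∀ v : G.V, ∃ e : G.E, G.s e = v)
    (hconn : ∀ v u : G.V, ∀ k : ℕ, ∃ w : G.Path,
      w.src = v ∧ w.rng = u ∧ n k ∣ w.length)
    {σ : G.E → Yt G n → Yt G n} (hσ : ∀ e, ∀ y ∈ De G n e, OdRel G n e y (σ e y))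
    {Y₀ : Set (Yt G n)} (hY₀ : ∀ e, ∀ y ∈ Y₀ ∩ De G n e, σ e y ∈ Y₀) {y : Yt G n}
    (hy : y ∈ Y₀) (k : ℕ) (v : G.V) : ∃ z ∈ Y₀, initPath z k = Path.nil v := by
  obtain ⟨q, hq_src, hq_len⟩ :=
    exists_path_length hnosink (n (k + 1) - (initPath y k).length) (yc y 0).rng
  obtain ⟨w, hw_src, hw_rng, hw_dvd⟩ := hconn q.rng v (k + 1)
  have hw : G.IsPathFrom q.rng w.edges := hw_src ▸ w.valid
  have hw_end : G.endAt q.rng w.edges = v := hw_src ▸ hw_rng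
  have hp : G.IsPathFrom (yc y 0).rng (q.edges ++ w.edges) :=
    isPathFrom_append _ _ _ (hq_src ▸ q.valid) (by rw [← hq_src]; exact hw)
  have hp' : G.IsPathFrom (initPath y k).rng (q.edges ++ w.edges) := initPath_rng y k ▸ hp
  refine ⟨_, foldl_odometer_mem h0 hdvd hσ hY₀ _ y hy hp, ?_⟩
  have hlen : n (k + 1) ∣ ((initPath y k).append _ hp').length := by
    have hlt := initPath_length_lt hdvd y k
    obtain ⟨c, hc⟩ := hw_dvd
    refine ⟨c + 1, ?_⟩
    simp only [Path.append, Path.length, List.length_append] at hlt hq_len hc ⊢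
    rw [hq_len, hc, Nat.mul_add, Nat.mul_one]
    omega
  rw [initPath_foldl_odometer h0 hdvd hσ _ y hp k hp', Path.rem_eq_nil hlen, Path.rng_append,
    initPath_rng, endAt_append, ← hq_src]
  exact congrArg Path.nil hw_end

theorem exists_mem_initPath_eq (h0 : n 0 = 1) (hdvd : ∀ i, n i ∣ n (i + 1))
    (hnosink : ∀ v : G.V, ∃ e : G.E, G.s e = v)
    (hconn : ∀ v u : G.V, ∀ k : ℕ, ∃ w : G.Path,
      w.src = v ∧ w.rng = u ∧ n k ∣ w.length)
    {σ : G.E → Yt G n → Yt G n} (hσ : ∀ e, ∀ y ∈ De G n e, OdRel G n e y (σ e y))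
    {Y₀ : Set (Yt G n)} (hY₀ : ∀ e, ∀ y ∈ Y₀ ∩ De G n e, σ e y ∈ Y₀) {y : Yt G n}
    (hy : y ∈ Y₀) (t : Yt G n) (k : ℕ) : ∃ z ∈ Y₀, initPath z k = initPath t k := by
  obtain ⟨z, hz, hz_nil⟩ :=
    exists_mem_initPath_eq_nil h0 hdvd hnosink hconn hσ hY₀ hy k (initPath t k).src
  have hp' : G.IsPathFrom (initPath z k).rng (initPath t k).edges :=
    hz_nil ▸ (initPath t k).valid
  have hp : G.IsPathFrom (yc z 0).rng (initPath t k).edges := initPath_rng z k ▸ hp'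
  refine ⟨_, foldl_odometer_mem h0 hdvd hσ hY₀ _ z hz hp, ?_⟩
  rw [initPath_foldl_odometer h0 hdvd hσ _ z hp k hp']
  simp only [hz_nil, Path.nil_append]
  exact Path.rem_eq_self (initPath_length_lt hdvd t k)

/-- Since `n (k + 1)` divides `|y_{k+1}|` and exceeds `|y_k ⋯ y_0|`, the length of the
truncation at `k + 1` determines `|y_{k+1}|`. -/
theorem length_yc_succ (hdvd : ∀ i, n i ∣ n (i + 1)) (y : Yt G n) (k : ℕ) :
    (yc y (k + 1)).length =
      (initPath y (k + 1)).length - (initPath y (k + 1)).length % n (k + 1) := by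
  obtain ⟨c, hc⟩ := dvd_length_yc y (k + 1)
  have hmod : (initPath y (k + 1)).length % n (k + 1) = (initPath y k).length := by
    rw [initPath_length_succ, hc, Nat.add_comm, Nat.add_mul_mod_self_left,
      Nat.mod_eq_of_lt (initPath_length_lt hdvd y k)]
  rw [hmod, initPath_length_succ, Nat.add_sub_cancel]

theorem eq_of_initPath_succ_eq (hdvd : ∀ i, n i ∣ n (i + 1)) {y t : Yt G n} {k : ℕ}
    (h : initPath y (k + 1) = initPath t (k + 1)) :
    yc y (k + 1) = yc t (k + 1) ∧ initPath y k = initPath t k := by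
  have hedges : (yc y (k + 1)).edges ++ lowEdges y (k + 1)
      = (yc t (k + 1)).edges ++ lowEdges t (k + 1) := by
    simpa only [initPath, lowEdges_succ (m := k + 1)] using congrArg Path.edges h
  have hlen : (yc y (k + 1)).length = (yc t (k + 1)).length := by
    rw [length_yc_succ hdvd y k, h, ← length_yc_succ hdvd t k]
  obtain ⟨htop, hlow⟩ := List.append_inj hedges hlen
  have htop' : yc y (k + 1) = yc t (k + 1) :=
    Path.ext (show (initPath y (k + 1)).src = (initPath t (k + 1)).src from
      congrArg Path.src h) htop
  refine ⟨htop', Path.ext ?_ hlow⟩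
  show (yc y k).src = (yc t k).src
  exact (y.prop k).trans ((congrArg Path.rng htop').trans (t.prop k).symm)

theorem val_eq_of_initPath_eq (hdvd : ∀ i, n i ∣ n (i + 1)) {y t : Yt G n} :
    ∀ {k : ℕ}, initPath y k = initPath t k → ∀ i ≤ k, y.val i = t.val i
  | 0, h, i, hi => by
    obtain rfl := Nat.le_zero.1 hi
    exact Subtype.ext ((initPath_zero y).symm.trans (h.trans (initPath_zero t)))
  | k + 1, h, i, hi => by
    obtain ⟨htop, hlow⟩ := eq_of_initPath_succ_eq hdvd h
    rcases Nat.le_succ_iff.1 hi with hi | rfl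
    · exact val_eq_of_initPath_eq hdvd hlow i hi
    · exact Subtype.ext htop

end Compactification

end DirGraph

open DirGraph in
theorem stmt19_general (G : DirGraph)
    (hnosink : ∀ v : G.V, ∃ e : G.E, G.s e = v)
    (n : ℕ → ℕ) (h0 : n 0 = 1) (hdvd : ∀ i, n i ∣ n (i + 1))
    (hconn : ∀ v u : G.V, ∀ k : ℕ, ∃ w : G.Path,
      w.src = v ∧ w.rng = u ∧ n k ∣ w.length)
    (σ : G.E → Yt G n → Yt G n)
    (hσ : ∀ (e : G.E), ∀ y ∈ De G n e, OdRel G n e y (σ e y))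
    (Y₀ : Set (Yt G n)) (hclosed : IsClosed Y₀) (hinv : Invariant G n σ Y₀)
    (hne : Y₀.Nonempty) :
    Y₀ = Set.univ := by
  obtain ⟨y, hy⟩ := hne
  refine Set.eq_univ_of_forall fun t => mem_of_forall_exists_eqOn_le hclosed fun k => ?_
  obtain ⟨z, hz, hzt⟩ := exists_mem_initPath_eq h0 hdvd hnosink hconn hσ hinv.1 hy t k
  exact ⟨z, hz, val_eq_of_initPath_eq hdvd hzt⟩

open DirGraph in
/-- If for all vertices `v, u` and every `k` there is a
path `w` from `v` to `u` with `n k ∣ |w|`, then the only nonempty closed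
invariant subset of `Y` is `Y` itself, i.e. `E(∞)` is minimal. -/
theorem stmt19 (G : DirGraph) [Fintype G.V] [Fintype G.E]
    (hnosource : ∀ v : G.V, ∃ e : G.E, G.r e = v)
    (hnosink : ∀ v : G.V, ∃ e : G.E, G.s e = v)
    (n : ℕ → ℕ) (h0 : n 0 = 1) (hmono : StrictMono n) (hdvd : ∀ i, n i ∣ n (i + 1))
    (hconn : ∀ v u : G.V, ∀ k : ℕ, ∃ w : G.Path,
      w.src = v ∧ w.rng = u ∧ n k ∣ w.length)
    (σ : G.E → Yt G n → Yt G n)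
    (hσ : ∀ (e : G.E), ∀ y ∈ De G n e, OdRel G n e y (σ e y))
    (Y₀ : Set (Yt G n)) (hclosed : IsClosed Y₀) (hinv : Invariant G n σ Y₀)
    (hne : Y₀.Nonempty) :
    Y₀ = Set.univ :=
  stmt19_general G hnosink n h0 hdvd hconn σ hσ Y₀ hclosed hinv hne
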